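/- Let U, Y be real Hilbert spaces, S : U → Y bounded linear, N : U → U bounded linear self-adjoint coercive with constant c₀ > 0, θ convex lsc proper on U, and b ∈ Y. Let Q_A : U → U and Q_S : Y → Y be bounded linear self-adjoint operators such that Q_A − N and Q_S − (I + S N⁻¹ S*) are positive semidefinite. Let w* = (u*, p*) be the solution of 0 ∈ Nu* + ∂θ(u*) + S*p*, 0 = Su* − p* + b. Define, for given (u^k, p^k), the exact inexact-Uzawa update ū^{k+1} = (Q_A + ∂θ)⁻¹((Q_A − N)u^k − S*p^k), p̄^{k+1} = p^k + Q_S⁻¹(S ū^{k+1} − p^k + b). Then with Q(u,p) = ((Q_A − N)u, Q_S p) and R(u,p) = ((Q_A − N)u, (Q_S − (1/2)(I + S N⁻¹ S*))p), one has the contraction inequality ‖w̄^{k+1} − w*‖_Q² ≤ ‖w^k − w*‖_Q² − ‖w̄^{k+1} − w^k‖_R², where ‖w‖_Q² = ⟨Qw, w⟩ and ‖w‖_R² = ⟨Rw, w⟩. -/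

import Mathlib

/-!
Write `e = ū - u*`, `d = ū - u`, `e' = p̄ - p*`, `d' = p̄ - p`, so that `w^k - w* = (e - d, e' - d')`.
Expanding both quadratic forms reduces the claim to a bound on the cross terms
`2⟪(Q_A - N) d, e⟫ + 2⟪Q_S d', e'⟫`. Monotonicity of `∂θ`, applied to the optimality conditions
of `ū` and `u*`, bounds the first, and the multiplier update gives `Q_S d' = S e - e' + d'`.
What is left are two completed squares, `⟪N (e - ½ N⁻¹S* d'), e - ½ N⁻¹S* d'⟫ ≥ 0` and
`‖e' - ½ d'‖² ≥ 0`.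
-/

open MeasureTheory RealInnerProductSpace

noncomputable section

/-- The convex subdifferential of an extended-real-valued function `θ` at `u`. -/
def subdiff {U : Type*} [NormedAddCommGroup U] [InnerProductSpace ℝ U]
    (θ : U → EReal) (u : U) : Set U :=
  {g | ∀ v : U, θ u + ((⟪g, v - u⟫ : ℝ) : EReal) ≤ θ v}

open scoped InnerProduct

section Subdifferential

variable {E : Type*} [NormedAddCommGroup E] [InnerProductSpace ℝ E] {θ : E → EReal}

lemma ne_top_of_mem_subdiff (hproper : ∃ v, θ v ≠ ⊤) {g x : E} (hg : g ∈ subdiff θ x) :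
    θ x ≠ ⊤ := by
  obtain ⟨v, hv⟩ := hproper
  intro hx
  have hle := hg v
  rw [hx, EReal.top_add_of_ne_bot (EReal.coe_ne_bot _), top_le_iff] at hle
  exact hv hle

lemma subdiff_monotone (hne_bot : ∀ v, θ v ≠ ⊥) (hproper : ∃ v, θ v ≠ ⊤) {g₁ g₂ x y : E}
    (h₁ : g₁ ∈ subdiff θ x) (h₂ : g₂ ∈ subdiff θ y) : 0 ≤ ⟪g₁ - g₂, x - y⟫ := by
  obtain ⟨a, ha⟩ : ∃ a : ℝ, θ x = a :=
    ⟨_, (EReal.coe_toReal (ne_top_of_mem_subdiff hproper h₁) (hne_bot x)).symm⟩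
  obtain ⟨c, hc⟩ : ∃ c : ℝ, θ y = c :=
    ⟨_, (EReal.coe_toReal (ne_top_of_mem_subdiff hproper h₂) (hne_bot y)).symm⟩
  have hxy : a + ⟪g₁, y - x⟫ ≤ c := by exact_mod_cast ha ▸ hc ▸ h₁ y
  have hyx : c + ⟪g₂, x - y⟫ ≤ a := by exact_mod_cast ha ▸ hc ▸ h₂ x
  rw [← neg_sub x y, inner_neg_right] at hxy
  rw [inner_sub_left]
  linarith

end Subdifferential

section QuadraticForms

variable {E F : Type*} [NormedAddCommGroup E] [InnerProductSpace ℝ E]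
  [NormedAddCommGroup F] [InnerProductSpace ℝ F]

lemma inner_apply_sub_sub_of_isSymmetric {T : E →L[ℝ] E} (hT : (T : E →ₗ[ℝ] E).IsSymmetric)
    (x y : E) : ⟪T (x - y), x - y⟫ = ⟪T x, x⟫ - 2 * ⟪T y, x⟫ + ⟪T y, y⟫ := by
  have hxy : ⟪T x, y⟫ = ⟪T y, x⟫ := by rw [← ContinuousLinearMap.coe_coe, hT, real_inner_comm]
  simp only [map_sub, inner_sub_left, inner_sub_right, hxy]
  ring

lemma real_inner_le_norm_sq_add_quarter (x y : F) : ⟪x, y⟫ ≤ ‖x‖ ^ 2 + 1 / 4 * ‖y‖ ^ 2 := by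
  nlinarith [real_inner_le_norm x y, sq_nonneg (‖x‖ - ‖y‖ / 2)]

-- Young: `⟪S x, q⟫ = ⟪N x, w⟫ ≤ ⟪N x, x⟫ + ¼ ⟪N w, w⟫`.
lemma inner_le_inner_self_add_quarter_of_isSymmetric [CompleteSpace E] [CompleteSpace F]
    {N : E →L[ℝ] E} (hN : (N : E →ₗ[ℝ] E).IsSymmetric) (hN_nonneg : ∀ x, 0 ≤ ⟪N x, x⟫)
    (S : E →L[ℝ] F) (x : E) {q : F} {w : E} (hw : N w = (S†) q) :
    ⟪S x, q⟫ ≤ ⟪N x, x⟫ + 1 / 4 * ⟪S w, q⟫ := by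
  have hxw : ⟪N w, x⟫ = ⟪S x, q⟫ := by
    rw [hw, ContinuousLinearMap.adjoint_inner_left, real_inner_comm]
  have hww : ⟪N w, w⟫ = ⟪S w, q⟫ := by
    rw [hw, ContinuousLinearMap.adjoint_inner_left, real_inner_comm]
  have hsq := hN_nonneg (x - (1 / 2 : ℝ) • w)
  rw [inner_apply_sub_sub_of_isSymmetric hN] at hsq
  simp only [map_smul, real_inner_smul_left, real_inner_smul_right, hxw, hww] at hsq
  linarith

end QuadraticForms

lemma uzawa_cross_terms_le {U Y : Type*} [NormedAddCommGroup U] [InnerProductSpace ℝ U]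
    [CompleteSpace U] [NormedAddCommGroup Y] [InnerProductSpace ℝ Y] [CompleteSpace Y]
    {N M : U →L[ℝ] U} {QS : Y →L[ℝ] Y} (S : U →L[ℝ] Y)
    (hN : (N : U →ₗ[ℝ] U).IsSymmetric) (hN_nonneg : ∀ x, 0 ≤ ⟪N x, x⟫)
    {eu du w : U} {ep dp : Y} (hw : N w = (S†) dp)
    (hmono : 0 ≤ ⟪-M du - N eu - (S†) (ep - dp), eu⟫)
    (hdual : QS dp = S eu - ep + dp) :
    2 * ⟪M du, eu⟫ + 2 * ⟪QS dp, ep⟫ ≤ 1 / 2 * (‖dp‖ ^ 2 + ⟪S w, dp⟫) := by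
  have hyoungU := inner_le_inner_self_add_quarter_of_isSymmetric hN hN_nonneg S eu hw
  have hyoungY := real_inner_le_norm_sq_add_quarter ep dp
  simp only [inner_sub_left, inner_neg_left, map_sub, ContinuousLinearMap.adjoint_inner_left]
    at hmono
  have hdual' : ⟪QS dp, ep⟫ = ⟪S eu, ep⟫ - ‖ep‖ ^ 2 + ⟪ep, dp⟫ := by
    rw [hdual, inner_add_left, inner_sub_left, real_inner_self_eq_norm_sq, real_inner_comm dp]
  rw [real_inner_comm (S eu) ep, real_inner_comm (S eu) dp] at hmono
  linarith

theorem stmt3_general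
    {U Y : Type*} [NormedAddCommGroup U] [InnerProductSpace ℝ U] [CompleteSpace U]
    [NormedAddCommGroup Y] [InnerProductSpace ℝ Y] [CompleteSpace Y]
    (S : U →L[ℝ] Y)
    (N : U →L[ℝ] U) (hNsa : ∀ u v : U, ⟪N u, v⟫ = ⟪u, N v⟫)
    (c₀ : ℝ) (hc₀ : 0 < c₀) (hcoer : ∀ u : U, c₀ * ‖u‖ ^ 2 ≤ ⟪N u, u⟫)
    (Ninv : U →L[ℝ] U) (hNinv₁ : ∀ u, N (Ninv u) = u)
    (θ : U → EReal)
    (hne_bot : ∀ u : U, θ u ≠ ⊥) (hproper : ∃ u : U, θ u ≠ ⊤)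
    (b : Y)
    (QA : U →L[ℝ] U) (hQAsa : ∀ u v : U, ⟪QA u, v⟫ = ⟪u, QA v⟫)
    (QS : Y →L[ℝ] Y) (hQSsa : ∀ p q : Y, ⟪QS p, q⟫ = ⟪p, QS q⟫)
    (QSinv : Y →L[ℝ] Y) (hQSinv₁ : ∀ p, QS (QSinv p) = p)
    -- the saddle point `w* = (u*, p*)`
    (ustar : U) (pstar : Y)
    (hustar : -(N ustar) - (ContinuousLinearMap.adjoint S) pstar ∈ subdiff θ ustar)
    (hpstar : S ustar - pstar + b = 0)
    -- the current iterate `w^k = (u, p)` and the exact update `w̄^{k+1} = (ubar, pbar)`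
    (u ubar : U) (p pbar : Y)
    (hubar : (QA u - N u) - (ContinuousLinearMap.adjoint S) p - QA ubar ∈ subdiff θ ubar)
    (hpbar : pbar = p + QSinv (S ubar - p + b)) :
    ⟪QA (ubar - ustar) - N (ubar - ustar), ubar - ustar⟫
        + ⟪QS (pbar - pstar), pbar - pstar⟫
      ≤ (⟪QA (u - ustar) - N (u - ustar), u - ustar⟫
          + ⟪QS (p - pstar), p - pstar⟫)
        - (⟪QA (ubar - u) - N (ubar - u), ubar - u⟫
            + (⟪QS (pbar - p), pbar - p⟫
              - (1 / 2) * (‖pbar - p‖ ^ 2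
                + ⟪S (Ninv ((ContinuousLinearMap.adjoint S) (pbar - p))), pbar - p⟫))) := by
  have hM : ((QA - N : U →L[ℝ] U) : U →ₗ[ℝ] U).IsSymmetric := by
    rw [ContinuousLinearMap.toLinearMap_sub]
    exact LinearMap.IsSymmetric.sub hQAsa hNsa
  have hN_nonneg (x : U) : 0 ≤ ⟪N x, x⟫ :=
    (mul_nonneg hc₀.le (sq_nonneg ‖x‖)).trans (hcoer x)
  have hgrad : (QA u - N u - (S†) p - QA ubar) - (-(N ustar) - (S†) pstar)
      = -(QA - N) (ubar - u) - N (ubar - ustar) - (S†) ((pbar - pstar) - (pbar - p)) := by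
    simp only [map_sub, sub_apply, sub_sub_sub_cancel_left]
    abel
  have hdual : QS (pbar - p) = S (ubar - ustar) - (pbar - pstar) + (pbar - p) := by
    have hb : b = pstar - S ustar := by rw [← sub_eq_zero, ← hpstar]; abel
    rw [hpbar, add_sub_cancel_left, hQSinv₁, map_sub, hb]
    abel
  have hcross := uzawa_cross_terms_le S hNsa hN_nonneg (hNinv₁ _)
    (hgrad ▸ subdiff_monotone hne_bot hproper hubar hustar) hdual
  have hu : u - ustar = (ubar - ustar) - (ubar - u) := (sub_sub_sub_cancel_left _ _ _).symm
  have hp : p - pstar = (pbar - pstar) - (pbar - p) := (sub_sub_sub_cancel_left _ _ _).symm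
  simp only [← sub_apply QA N]
  rw [hu, hp, inner_apply_sub_sub_of_isSymmetric hM (ubar - ustar),
    inner_apply_sub_sub_of_isSymmetric hQSsa (pbar - pstar)]
  linarith

/-- contraction inequality for one exact step of the inexact Uzawa method:
`‖w̄^{k+1} − w*‖_Q² ≤ ‖w^k − w*‖_Q² − ‖w̄^{k+1} − w^k‖_R²`, where
`‖(u,p)‖_Q² = ⟨(Q_A − N)u, u⟩ + ⟨Q_S p, p⟩` and
`‖(u,p)‖_R² = ⟨(Q_A − N)u, u⟩ + ⟨(Q_S − ½(I + S N⁻¹ S*)) p, p⟩`. -/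
theorem stmt3
    {U Y : Type*} [NormedAddCommGroup U] [InnerProductSpace ℝ U] [CompleteSpace U]
    [NormedAddCommGroup Y] [InnerProductSpace ℝ Y] [CompleteSpace Y]
    (S : U →L[ℝ] Y)
    (N : U →L[ℝ] U) (hNsa : ∀ u v : U, ⟪N u, v⟫ = ⟪u, N v⟫)
    (c₀ : ℝ) (hc₀ : 0 < c₀) (hcoer : ∀ u : U, c₀ * ‖u‖ ^ 2 ≤ ⟪N u, u⟫)
    (Ninv : U →L[ℝ] U) (hNinv₁ : ∀ u, N (Ninv u) = u) (hNinv₂ : ∀ u, Ninv (N u) = u)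
    (θ : U → EReal)
    (hconv : ∀ u v : U, ∀ t : ℝ, 0 ≤ t → t ≤ 1 →
      θ (t • u + (1 - t) • v) ≤ (t : EReal) * θ u + ((1 - t : ℝ) : EReal) * θ v)
    (hlsc : LowerSemicontinuous θ)
    (hne_bot : ∀ u : U, θ u ≠ ⊥) (hproper : ∃ u : U, θ u ≠ ⊤)
    (b : Y)
    (QA : U →L[ℝ] U) (hQAsa : ∀ u v : U, ⟪QA u, v⟫ = ⟪u, QA v⟫)
    (hQA_psd : ∀ u : U, 0 ≤ ⟪QA u - N u, u⟫)
    (QS : Y →L[ℝ] Y) (hQSsa : ∀ p q : Y, ⟪QS p, q⟫ = ⟪p, QS q⟫)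
    (hQS_psd : ∀ p : Y,
      0 ≤ ⟪QS p - (p + S (Ninv ((ContinuousLinearMap.adjoint S) p))), p⟫)
    (QSinv : Y →L[ℝ] Y) (hQSinv₁ : ∀ p, QS (QSinv p) = p) (hQSinv₂ : ∀ p, QSinv (QS p) = p)
    -- the saddle point `w* = (u*, p*)`
    (ustar : U) (pstar : Y)
    (hustar : -(N ustar) - (ContinuousLinearMap.adjoint S) pstar ∈ subdiff θ ustar)
    (hpstar : S ustar - pstar + b = 0)
    -- the current iterate `w^k = (u, p)` and the exact update `w̄^{k+1} = (ubar, pbar)`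
    (u ubar : U) (p pbar : Y)
    (hubar : (QA u - N u) - (ContinuousLinearMap.adjoint S) p - QA ubar ∈ subdiff θ ubar)
    (hpbar : pbar = p + QSinv (S ubar - p + b)) :
    ⟪QA (ubar - ustar) - N (ubar - ustar), ubar - ustar⟫
        + ⟪QS (pbar - pstar), pbar - pstar⟫
      ≤ (⟪QA (u - ustar) - N (u - ustar), u - ustar⟫
          + ⟪QS (p - pstar), p - pstar⟫)
        - (⟪QA (ubar - u) - N (ubar - u), ubar - u⟫
            + (⟪QS (pbar - p), pbar - p⟫
              - (1 / 2) * (‖pbar - p‖ ^ 2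
                + ⟪S (Ninv ((ContinuousLinearMap.adjoint S) (pbar - p))), pbar - p⟫))) :=
  stmt3_general S N hNsa c₀ hc₀ hcoer Ninv hNinv₁ θ hne_bot hproper b QA hQAsa QS hQSsa QSinv
    hQSinv₁ ustar pstar hustar hpstar u ubar p pbar hubar hpbar
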